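/- For every real x ≥ 1, ln(x + 1/2) < ψ(x + 1) ≤ ln(x + e^{1−γ} − 1). -/

import Mathlib

open Real Filter Set

/-- The digamma (psi) function: the logarithmic derivative of the gamma function. -/
noncomputable def psi (x : ℝ) : ℝ := deriv (fun t : ℝ => Real.log (Real.Gamma t)) x

/-!
Log-convexity of `Γ` squeezes `ψ t` between `log (t - 1)` and `log t`, so `ψ t - log t → 0`.
Together with `ψ (t + 1) = ψ t + 1 / t` this gives a telescoping principle: a function `φ` with
`φ (t + 1) ≤ φ t` that tends to `0` is nonnegative. For `φ t = ψ t - log (t - 1/2)` the step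
inequality is `log (1 + 1 / (t - 1/2)) > 1 / t`, which yields the lower bound. For
`φ t = log (t - 1/2 + 1 / (12 t)) - ψ t` it yields `exp (ψ t) ≤ t - 1/2 + 1 / (12 t)`; combined with
`ψ' t = ∑ 1 / (t + k)² ≤ 1 / t + 1 / (2 t²) + 1 / (6 t³)` this gives `ψ' t * exp (ψ t) ≤ 1`, so
`exp (ψ t) - t` is nonincreasing on `(1, ∞)`. Comparing `t = x + 1` with `t = 2`, where
`ψ 2 = 1 - γ`, gives the upper bound.
-/

open Topology

lemma ne_neg_natCast_of_pos {x : ℝ} (hx : 0 < x) (m : ℕ) : x ≠ -m := by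
  have := m.cast_nonneg (α := ℝ); linarith

lemma differentiableAt_log_Gamma {x : ℝ} (hx : 0 < x) :
    DifferentiableAt ℝ (fun t => log (Gamma t)) x :=
  (differentiableAt_Gamma (ne_neg_natCast_of_pos hx)).log (Gamma_pos_of_pos hx).ne'

lemma log_Gamma_add_one {x : ℝ} (hx : 0 < x) :
    log (Gamma (x + 1)) = log (Gamma x) + log x := by
  rw [Gamma_add_one hx.ne', log_mul hx.ne' (Gamma_pos_of_pos hx).ne', add_comm]

lemma psi_add_one {x : ℝ} (hx : 0 < x) : psi (x + 1) = psi x + x⁻¹ := by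
  rw [psi, ← deriv_comp_add_const, ← deriv_log, psi,
    ← deriv_add (differentiableAt_log_Gamma hx) (differentiableAt_log hx.ne')]
  refine EventuallyEq.deriv_eq ?_
  filter_upwards [eventually_gt_nhds hx] with t ht using log_Gamma_add_one ht

lemma psi_add_nat {x : ℝ} (hx : 0 < x) (n : ℕ) :
    psi (x + n) = psi x + ∑ k ∈ Finset.range n, (x + k)⁻¹ := by
  induction n with
  | zero => simp
  | succ n ih =>
    rw [Nat.cast_succ, ← add_assoc, psi_add_one (by positivity), ih, Finset.sum_range_succ,
      add_assoc]

lemma psi_one : psi 1 = -eulerMascheroniConstant := by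
  rw [psi, deriv.log (differentiableAt_Gamma (ne_neg_natCast_of_pos one_pos)) (by simp),
    hasDerivAt_Gamma_one.deriv, Gamma_one, div_one]

lemma psi_two : psi 2 = 1 - eulerMascheroniConstant := by
  rw [show (2 : ℝ) = 1 + 1 by norm_num, psi_add_one one_pos, psi_one]
  ring

lemma psi_le_log {x : ℝ} (hx : 0 < x) : psi x ≤ log x := by
  have h := convexOn_log_Gamma.deriv_le_slope (mem_Ioi.mpr hx) (mem_Ioi.mpr (by linarith))
    (lt_add_one x) (differentiableAt_log_Gamma hx)
  rwa [slope_def_field, Function.comp_apply, Function.comp_apply, log_Gamma_add_one hx,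
    add_sub_cancel_left, add_sub_cancel_left, div_one] at h

lemma log_sub_one_le_psi {x : ℝ} (hx : 1 < x) : log (x - 1) ≤ psi x := by
  have hx' : 0 < x - 1 := by linarith
  have h := convexOn_log_Gamma.slope_le_deriv (mem_Ioi.mpr hx') (mem_Ioi.mpr (by linarith))
    (sub_one_lt x) (differentiableAt_log_Gamma (by linarith))
  have hrec := log_Gamma_add_one hx'
  rw [sub_add_cancel] at hrec
  rwa [slope_def_field, Function.comp_apply, Function.comp_apply, hrec, add_sub_cancel_left,
    sub_sub_cancel, div_one] at h

lemma tendsto_psi_sub_log : Tendsto (fun t => psi t - log t) atTop (𝓝 0) := by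
  refine tendsto_of_tendsto_of_tendsto_of_le_of_le' (tendsto_log_comp_add_sub_log (-1))
    tendsto_const_nhds ?_ ?_
  · filter_upwards [eventually_gt_atTop 1] with t ht
    simpa [← sub_eq_add_neg] using log_sub_one_le_psi ht
  · filter_upwards [eventually_gt_atTop 0] with t ht
    simpa using psi_le_log ht

lemma tendsto_psi_add_sub_log (c : ℝ) : Tendsto (fun t => psi (t + c) - log t) atTop (𝓝 0) := by
  simpa using ((tendsto_psi_sub_log.comp (tendsto_atTop_add_const_right _ c tendsto_id)).add
    (tendsto_log_comp_add_sub_log c))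

lemma nonneg_of_tendsto_zero_of_add_one_le {φ : ℝ → ℝ} {x : ℝ}
    (hφ : ∀ t, x ≤ t → φ (t + 1) ≤ φ t) (hlim : Tendsto φ atTop (𝓝 0)) : 0 ≤ φ x := by
  have hanti : Antitone fun n : ℕ => φ (x + n) := antitone_nat_of_succ_le fun n => by
    simpa [add_assoc] using hφ (x + n) (by simp)
  simpa using hanti.le_of_tendsto
    (hlim.comp (tendsto_atTop_add_const_left _ x tendsto_natCast_atTop_atTop)) 0

lemma inv_add_half_lt_log_one_add_inv {a : ℝ} (ha : 0 < a) : (a + 1 / 2)⁻¹ < log (1 + a⁻¹) := by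
  have h := sum_le_hasSum (Finset.range 2) (fun k _ => by positivity) (hasSum_log_one_add_inv ha)
  have h0 : (a + 1 / 2)⁻¹ = 2 * (1 / (2 * 0 + 1)) * (1 / (2 * a + 1)) ^ (2 * 0 + 1) := by
    norm_num
    field_simp
  have h1 : (0 : ℝ) < 2 * (1 / (2 * 1 + 1)) * (1 / (2 * a + 1)) ^ (2 * 1 + 1) := by positivity
  simp only [Finset.sum_range_succ, Finset.sum_range_zero, Nat.cast_zero, Nat.cast_one] at h
  linarith

lemma psi_sub_log_sub_half_lt {t : ℝ} (ht : 1 / 2 < t) :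
    psi (t + 1) - log (t + 1 - 1 / 2) < psi t - log (t - 1 / 2) := by
  have ht' : 0 < t - 1 / 2 := by linarith
  have h := inv_add_half_lt_log_one_add_inv ht'
  rw [sub_add_cancel] at h
  have hlog : log (t + 1 - 1 / 2) = log (t - 1 / 2) + log (1 + (t - 1 / 2)⁻¹) := by
    rw [← log_mul ht'.ne' (by positivity), mul_add, mul_one, mul_inv_cancel₀ ht'.ne']
    ring_nf
  rw [psi_add_one (by linarith), hlog]
  linarith

lemma log_sub_half_lt_psi {x : ℝ} (hx : 1 / 2 < x) : log (x - 1 / 2) < psi x := by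
  have hlim : Tendsto (fun t => psi t - log (t - 1 / 2)) atTop (𝓝 0) := by
    simpa [sub_eq_add_neg] using tendsto_psi_sub_log.sub (tendsto_log_comp_add_sub_log (-(1 / 2)))
  have h := nonneg_of_tendsto_zero_of_add_one_le (x := x + 1)
    (fun t ht => (psi_sub_log_sub_half_lt (by linarith)).le) hlim
  linarith [psi_sub_log_sub_half_lt hx]

lemma add_one_sub_half_add_le_exp_inv_mul {t : ℝ} (ht : 1 ≤ t) :
    t + 1 - 1 / 2 + (12 * (t + 1))⁻¹ ≤ exp t⁻¹ * (t - 1 / 2 + (12 * t)⁻¹) := by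
  have ht0 : 0 < t := by linarith
  have hexp : 1 + t⁻¹ + t⁻¹ ^ 2 / 2 + t⁻¹ ^ 3 / 6 ≤ exp t⁻¹ := by
    simpa [Finset.sum_range_succ, Nat.factorial] using
      sum_le_exp_of_nonneg (inv_nonneg.mpr ht0.le) 4
  have hpoly : (1 + t⁻¹ + t⁻¹ ^ 2 / 2 + t⁻¹ ^ 3 / 6) * (t - 1 / 2 + (12 * t)⁻¹)
      - (t + 1 - 1 / 2 + (12 * (t + 1))⁻¹)
      = (6 * t ^ 3 - 3 * t ^ 2 - 2 * t + 1) / (72 * t ^ 4 * (t + 1)) := by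
    field_simp
    ring
  have hpoly_nonneg : 0 ≤ (6 * t ^ 3 - 3 * t ^ 2 - 2 * t + 1) / (72 * t ^ 4 * (t + 1)) := by
    apply div_nonneg _ (by positivity)
    nlinarith [mul_le_mul ht ht zero_le_one ht0.le]
  have hB : 0 ≤ t - 1 / 2 + (12 * t)⁻¹ := by
    have : 0 ≤ (12 * t)⁻¹ := by positivity
    linarith
  linarith [mul_le_mul_of_nonneg_right hexp hB]

lemma psi_le_log_sub_half_add_inv {x : ℝ} (hx : 1 ≤ x) :
    psi x ≤ log (x - 1 / 2 + (12 * x)⁻¹) := by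
  have hB : ∀ t : ℝ, 1 ≤ t → t - 1 / 2 < t - 1 / 2 + (12 * t)⁻¹ ∧ (12 * t)⁻¹ ≤ 1 / 2 :=
    fun t ht => ⟨by simp only [lt_add_iff_pos_right]; positivity,
      by rw [inv_le_comm₀ (by positivity) (by norm_num)]; linarith⟩
  have hlog_lim : Tendsto (fun t => log (t - 1 / 2 + (12 * t)⁻¹) - log t) atTop (𝓝 0) := by
    refine tendsto_of_tendsto_of_tendsto_of_le_of_le' (tendsto_log_comp_add_sub_log (-(1 / 2)))
      tendsto_const_nhds ?_ ?_
    · filter_upwards [eventually_ge_atTop 1] with t ht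
      rw [← sub_eq_add_neg]
      gcongr
      · linarith
      · exact (hB t ht).1.le
    · filter_upwards [eventually_ge_atTop 1] with t ht
      rw [sub_nonpos]
      exact log_le_log (by linarith [(hB t ht).1]) (by linarith [(hB t ht).2])
  have hstep : ∀ t, x ≤ t → log (t + 1 - 1 / 2 + (12 * (t + 1))⁻¹) - psi (t + 1)
      ≤ log (t - 1 / 2 + (12 * t)⁻¹) - psi t := fun t ht => by
    have ht1 : 1 ≤ t := hx.trans ht
    have hBt := (hB t ht1).1
    have h := log_le_log (by linarith [(hB (t + 1) (by linarith)).1])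
      (add_one_sub_half_add_le_exp_inv_mul ht1)
    rw [log_mul (exp_pos _).ne' (by linarith), log_exp] at h
    rw [psi_add_one (by linarith)]
    linarith
  have hlim : Tendsto (fun t => log (t - 1 / 2 + (12 * t)⁻¹) - psi t) atTop (𝓝 0) := by
    simpa using hlog_lim.sub tendsto_psi_sub_log
  linarith [nonneg_of_tendsto_zero_of_add_one_le hstep hlim]

lemma hasSum_psi_sub_psi_one {w : ℝ} (hw : 1 ≤ w) :
    HasSum (fun k : ℕ => (1 + k : ℝ)⁻¹ - (w + k)⁻¹) (psi w - psi 1) := by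
  have hnonneg : ∀ k : ℕ, 0 ≤ (1 + k : ℝ)⁻¹ - (w + k)⁻¹ := fun k => by
    rw [sub_nonneg]
    gcongr
  have hpartial : ∀ n : ℕ, ∑ k ∈ Finset.range n, ((1 + k : ℝ)⁻¹ - (w + k)⁻¹)
      = psi w - psi 1 - (psi (w + n) - psi (1 + n)) := fun n => by
    rw [Finset.sum_sub_distrib, psi_add_nat one_pos, psi_add_nat (by linarith)]
    ring
  have hshift : Tendsto (fun n : ℕ => psi (w + n) - psi (1 + n)) atTop (𝓝 0) := by
    have h := ((tendsto_psi_add_sub_log w).sub (tendsto_psi_add_sub_log 1)).comp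
      tendsto_natCast_atTop_atTop
    rw [sub_zero] at h
    exact h.congr fun n => by simp only [Function.comp_apply]; ring_nf
  rw [hasSum_iff_tendsto_nat_of_nonneg hnonneg]
  simpa [hpartial] using hshift.const_sub (psi w - psi 1)

lemma hasDerivAt_psi {y : ℝ} (hy : 1 < y) : HasDerivAt psi (∑' k : ℕ, ((y + k) ^ 2)⁻¹) y := by
  have hderiv : ∀ (k : ℕ), ∀ w ∈ Ioi (1 : ℝ),
      HasDerivAt (fun w : ℝ => (1 + k : ℝ)⁻¹ - (w + k)⁻¹) ((w + k) ^ 2)⁻¹ w := fun k w hw => by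
    have hwk : w + k ≠ 0 := by have : (1 : ℝ) < w := hw; positivity
    simpa [neg_div] using (((hasDerivAt_id w).add_const (k : ℝ)).inv hwk).const_sub (1 + k : ℝ)⁻¹
  have hbound : ∀ (k : ℕ), ∀ w ∈ Ioi (1 : ℝ), ‖((w + k) ^ 2)⁻¹‖ ≤ ((1 + k : ℝ) ^ 2)⁻¹ :=
    fun k w hw => by
      have : (1 : ℝ) < w := hw
      rw [norm_inv, norm_pow, Real.norm_of_nonneg (by positivity)]
      gcongr
  have hsummable : Summable fun k : ℕ => ((1 + k : ℝ) ^ 2)⁻¹ := by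
    simpa [add_comm] using (summable_nat_add_iff 1).mpr (Real.summable_nat_pow_inv.mpr one_lt_two)
  have hseries : psi =ᶠ[𝓝 y] fun w => psi 1 + ∑' k : ℕ, ((1 + k : ℝ)⁻¹ - (w + k)⁻¹) := by
    filter_upwards [Ioi_mem_nhds hy] with w hw
    rw [(hasSum_psi_sub_psi_one (le_of_lt hw)).tsum_eq]
    ring
  exact ((hasDerivAt_tsum_of_isPreconnected hsummable isOpen_Ioi isPreconnected_Ioi hderiv
    hbound hy (hasSum_psi_sub_psi_one hy.le).summable hy).const_add (psi 1)).congr_of_eventuallyEq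
    hseries

lemma tsum_inv_add_sq_le {y : ℝ} (hy : 0 < y) :
    ∑' k : ℕ, ((y + k) ^ 2)⁻¹ ≤ y⁻¹ + (2 * y ^ 2)⁻¹ + (6 * y ^ 3)⁻¹ := by
  obtain ⟨H, hH⟩ : ∃ H : ℝ → ℝ, ∀ t, H t = t⁻¹ + (2 * t ^ 2)⁻¹ + (6 * t ^ 3)⁻¹ :=
    ⟨_, fun _ => rfl⟩
  have hstep : ∀ t : ℝ, 0 < t → (t ^ 2)⁻¹ ≤ H t - H (t + 1) := fun t ht => by
    have hdiff : H t - H (t + 1) - (t ^ 2)⁻¹ = (6 * t ^ 3 * (t + 1) ^ 3)⁻¹ := by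
      rw [hH, hH]
      field_simp
      ring
    have : 0 ≤ (6 * t ^ 3 * (t + 1) ^ 3)⁻¹ := by positivity
    linarith
  refine Real.tsum_le_of_sum_range_le (fun k => by positivity) fun n => ?_
  calc ∑ k ∈ Finset.range n, ((y + k) ^ 2)⁻¹
      ≤ ∑ k ∈ Finset.range n, (H (y + k) - H (y + (k + 1 : ℕ))) :=
        Finset.sum_le_sum fun k _ => by
          simpa [add_assoc] using hstep (y + k) (by positivity)
    _ = H y - H (y + n) := by simpa using Finset.sum_range_sub' (fun k : ℕ => H (y + k)) n
    _ ≤ H y := by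
        have : 0 ≤ H (y + n) := by rw [hH]; positivity
        linarith
    _ = y⁻¹ + (2 * y ^ 2)⁻¹ + (6 * y ^ 3)⁻¹ := hH y

lemma antitoneOn_exp_psi_sub_self : AntitoneOn (fun y => exp (psi y) - y) (Ioi 1) := by
  have hderiv : ∀ y ∈ Ioi (1 : ℝ),
      HasDerivAt (fun y => exp (psi y) - y) (exp (psi y) * ∑' k : ℕ, ((y + k) ^ 2)⁻¹ - 1) y :=
    fun y hy => (hasDerivAt_psi hy).exp.sub (hasDerivAt_id y)
  refine antitoneOn_of_hasDerivWithinAt_nonpos (convex_Ioi 1)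
    (fun y hy => (hderiv y hy).continuousAt.continuousWithinAt)
    (fun y hy => (hderiv y (interior_subset hy)).hasDerivWithinAt) fun y hy => ?_
  rw [interior_Ioi, mem_Ioi] at hy
  have hy0 : 0 < y := by linarith
  have hB : 0 < y - 1 / 2 + (12 * y)⁻¹ := by
    have : 0 < (12 * y)⁻¹ := by positivity
    linarith
  have hexp : exp (psi y) ≤ y - 1 / 2 + (12 * y)⁻¹ :=
    (le_log_iff_exp_le hB).mp (psi_le_log_sub_half_add_inv hy.le)
  have hprod : (y - 1 / 2 + (12 * y)⁻¹) * (y⁻¹ + (2 * y ^ 2)⁻¹ + (6 * y ^ 3)⁻¹)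
      = 1 - (3 * y - 1) / (72 * y ^ 4) := by
    field_simp
    ring
  have hprod_le : (y - 1 / 2 + (12 * y)⁻¹) * (y⁻¹ + (2 * y ^ 2)⁻¹ + (6 * y ^ 3)⁻¹) ≤ 1 := by
    rw [hprod, sub_le_self_iff]
    exact div_nonneg (by linarith) (by positivity)
  have hsum_nonneg : 0 ≤ ∑' k : ℕ, ((y + k) ^ 2)⁻¹ := tsum_nonneg fun k => by positivity
  calc exp (psi y) * ∑' k : ℕ, ((y + k) ^ 2)⁻¹ - 1
      ≤ (y - 1 / 2 + (12 * y)⁻¹) * (y⁻¹ + (2 * y ^ 2)⁻¹ + (6 * y ^ 3)⁻¹) - 1 := by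
        gcongr
        exact tsum_inv_add_sq_le hy0
    _ ≤ 0 := by linarith

theorem psi_succ_bounds (x : ℝ) (hx : 1 ≤ x) :
    Real.log (x + 1/2) < psi (x + 1) ∧
      psi (x + 1) ≤ Real.log (x + Real.exp (1 - Real.eulerMascheroniConstant) - 1) := by
  constructor
  · have h := log_sub_half_lt_psi (x := x + 1) (by linarith)
    rwa [show x + 1 - 1 / 2 = x + 1 / 2 by ring] at h
  · have h : exp (psi (x + 1)) - (x + 1) ≤ exp (psi 2) - 2 :=
      antitoneOn_exp_psi_sub_self (by norm_num) (show 1 < x + 1 by linarith) (by linarith)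
    rw [psi_two] at h
    rw [le_log_iff_exp_le (by linarith [exp_pos (1 - eulerMascheroniConstant)])]
    linarith
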